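/- Order optimality in pathwise form (Corollary 2): Let d ≥ 1, β ∈ (0,1], let k ≥ max(1,β) and m with 1 ≤ m ≤ k+1 be real numbers, let 𝔧 ≥ 1 be a real number, and let Γ₀ > 0. Define χ := max( m(k−β)/(k+2) + 1, (k+2−β)/2 ) and ζ := χ/(k+1−β). There exists Γ > 0, depending only on d, β, k, m, 𝔧, Γ₀, such that for every α ∈ [1/2, 1), every x ∈ ℝ^d with ‖x‖ ≥ (1−α)^{−ζ}, every sequence (x_t)_{t≥0} in ℝ^d with x₀ = x and ‖x_{t+1} − x_t‖ ≤ 𝔧 for all t, and every function H : ℝ^d → ℝ satisfying 0 ≤ H(y) ≤ Γ₀( (1+‖y‖)^{k−β} + (1−α)^{−m(k−β)/(k+2)} + (1−α)^{−(k−β)/2} ) for all y ∈ ℝ^d, one has Σ_{t=0}^∞ α^t H(x_t) ≤ Γ Σ_{t=0}^∞ α^t ‖x_t‖^{k−β}. -/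

import Mathlib

/-!
Write `r = k - β`, `ε = 1 - α` and `S = ∑' t, α ^ t * ‖xs t‖ ^ r`. Since
`(1 + s) ^ r ≤ 2 ^ r (1 + s ^ r)`, the discounted sum of `H` is at most `Γ₀ 2 ^ r S` plus
`Γ₀ (2 ^ r + ε ^ (-a) + ε ^ (-r/2)) / ε` with `a = m r / (k + 2)`, and the latter is
`O(ε ^ (-χ))` because `χ ≥ a + 1` and `χ ≥ r/2 + 1`.

It remains to bound `ε ^ (-χ)` by `S`. With jumps at most `jmp`, the trajectory stays above
`‖x‖ / 2` during the first `N = ‖x‖ / (2 jmp)` steps, whose discounted weight is at least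
`N / (1 + N ε)`, so `S ≳ ‖x‖ ^ (r + 1) / (2 jmp + ‖x‖ ε)`. As `‖x‖ ≥ ε ^ (-ζ)` and
`χ = ζ (r + 1)` with `ζ ≤ 1`, both `‖x‖ ^ (r + 1) ≥ ε ^ (-χ)` and `‖x‖ ^ r ≥ ε ^ (1 - χ)`,
which gives `S ≳ ε ^ (-χ)`.
-/

open Finset

lemma Real.add_rpow_le_two_rpow_mul_rpow_add_rpow {a b p : ℝ} (ha : 0 ≤ a) (hb : 0 ≤ b)
    (hp : 0 ≤ p) : (a + b) ^ p ≤ 2 ^ p * (a ^ p + b ^ p) := calc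
  (a + b) ^ p ≤ (2 * max a b) ^ p := by
    rw [two_mul]; gcongr <;> simp
  _ = 2 ^ p * max (a ^ p) (b ^ p) := by
    rw [Real.mul_rpow zero_le_two (le_max_of_le_left ha), Real.rpow_max ha hb hp]
  _ ≤ 2 ^ p * (a ^ p + b ^ p) := by
    gcongr; exact max_le_add_of_nonneg (by positivity) (by positivity)

lemma div_one_add_mul_one_sub_le_geom_sum {α : ℝ} (hα0 : 0 ≤ α) (hα1 : α < 1) (n : ℕ) :
    n / (1 + n * (1 - α)) ≤ ∑ i ∈ range n, α ^ i := by
  have hε : 0 < 1 - α := by linarith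
  have hpow : α ^ n * (1 + n * (1 - α)) ≤ 1 := calc
    α ^ n * (1 + n * (1 - α)) ≤ α ^ n * (1 + (1 - α)) ^ n := by
      gcongr; exact one_add_mul_le_pow (by linarith) n
    _ = (1 - (1 - α) ^ 2) ^ n := by rw [← mul_pow]; ring
    _ ≤ 1 := pow_le_one₀ (by nlinarith) (by nlinarith)
  have hsum : (∑ i ∈ range n, α ^ i) * (1 - α) = 1 - α ^ n := by
    rw [← neg_sub, mul_neg, geom_sum_mul]; ring
  rw [div_le_iff₀ (by positivity)]
  refine le_of_mul_le_mul_right ?_ hε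
  calc (n : ℝ) * (1 - α) ≤ (1 - α ^ n) * (1 + n * (1 - α)) := by linarith
    _ = _ := by rw [← hsum]; ring

lemma summable_geometric_mul_rpow_of_le_add_mul {α r A J : ℝ} {f : ℕ → ℝ} (hα0 : 0 ≤ α)
    (hα1 : α < 1) (hr : 0 ≤ r) (hJ : 0 ≤ J) (hf0 : ∀ t, 0 ≤ f t) (hf : ∀ t, f t ≤ A + t * J) :
    Summable fun t ↦ α ^ t * f t ^ r := by
  set n := ⌈r⌉₊
  have hA : 0 ≤ 1 + A := by linarith [hf0 0, show f 0 ≤ A by simpa using hf 0]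
  have hα : ‖α‖ < 1 := by rwa [Real.norm_of_nonneg hα0]
  have hdom : Summable fun t : ℕ ↦
      2 ^ (n - 1) * (1 + A) ^ n * α ^ t + 2 ^ (n - 1) * J ^ n * ((t : ℝ) ^ n * α ^ t) :=
    ((summable_geometric_of_lt_one hα0 hα1).mul_left _).add
      ((summable_pow_mul_geometric_of_norm_lt_one n hα).mul_left _)
  refine hdom.of_nonneg_of_le (fun t ↦ by have := hf0 t; positivity) fun t ↦ ?_
  have hfn : f t ^ r ≤ (1 + A + t * J) ^ n := calc
    f t ^ r ≤ (1 + f t) ^ r := by gcongr; exacts [hf0 t, by linarith]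
    _ ≤ (1 + f t) ^ (n : ℝ) :=
      Real.rpow_le_rpow_of_exponent_le (by linarith [hf0 t]) (Nat.le_ceil r)
    _ ≤ (1 + A + t * J) ^ n := by
      rw [Real.rpow_natCast]
      exact pow_le_pow_left₀ (by linarith [hf0 t]) (by linarith [hf t]) n
  have hsplit := add_pow_le hA (by positivity : 0 ≤ (t : ℝ) * J) n
  calc α ^ t * f t ^ r ≤ α ^ t * (2 ^ (n - 1) * ((1 + A) ^ n + (t * J) ^ n)) := by
        gcongr; exact hfn.trans hsplit
    _ = _ := by ring

lemma tsum_geometric_mul_le_of_le_mul_add {α A B : ℝ} {f g : ℕ → ℝ} (hα0 : 0 ≤ α) (hα1 : α < 1)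
    (hf0 : ∀ t, 0 ≤ f t) (hf : ∀ t, f t ≤ A * g t + B)
    (hg : Summable fun t ↦ α ^ t * g t) :
    ∑' t, α ^ t * f t ≤ A * ∑' t, α ^ t * g t + B * (1 - α)⁻¹ := by
  have hgeom := summable_geometric_of_lt_one hα0 hα1
  have hdom : Summable fun t ↦ A * (α ^ t * g t) + B * α ^ t :=
    (hg.mul_left A).add (hgeom.mul_left B)
  have hle : ∀ t, α ^ t * f t ≤ A * (α ^ t * g t) + B * α ^ t := fun t ↦ by
    nlinarith [mul_le_mul_of_nonneg_left (hf t) (pow_nonneg hα0 t)]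
  calc ∑' t, α ^ t * f t ≤ ∑' t, (A * (α ^ t * g t) + B * α ^ t) :=
        (hdom.of_nonneg_of_le (fun t ↦ mul_nonneg (pow_nonneg hα0 t) (hf0 t)) hle).tsum_le_tsum
          hle hdom
    _ = A * ∑' t, α ^ t * g t + B * (1 - α)⁻¹ := by
        rw [(hg.mul_left A).tsum_add (hgeom.mul_left B), tsum_mul_left, tsum_mul_left,
          tsum_geometric_of_lt_one hα0 hα1]

lemma add_rpow_neg_add_rpow_neg_mul_inv_le {ε a b χ c : ℝ} (hε0 : 0 < ε) (hε1 : ε ≤ 1)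
    (hc : 0 ≤ c) (hχ : 1 ≤ χ) (ha : a + 1 ≤ χ) (hb : b + 1 ≤ χ) :
    (c + ε ^ (-a) + ε ^ (-b)) * ε⁻¹ ≤ (c + 2) * ε ^ (-χ) := by
  have hexp : ∀ p, p + 1 ≤ χ → ε ^ (-p) * ε⁻¹ ≤ ε ^ (-χ) := fun p hp ↦ by
    rw [← Real.rpow_neg_one, ← Real.rpow_add hε0]
    exact Real.rpow_le_rpow_of_exponent_ge hε0 hε1 (by linarith)
  have h0 := hexp 0 (by linarith)
  rw [neg_zero, Real.rpow_zero, one_mul] at h0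
  nlinarith [hexp a ha, hexp b hb]

section Trajectory

variable {E : Type*} [SeminormedAddCommGroup E] {xs : ℕ → E} {J : ℝ}

lemma norm_sub_le_mul_of_norm_succ_sub_le (hjump : ∀ t, ‖xs (t + 1) - xs t‖ ≤ J) (t : ℕ) :
    ‖xs t - xs 0‖ ≤ t * J := by
  have := dist_le_range_sum_of_dist_le (f := xs) (d := fun _ ↦ J) t fun {i} _ ↦ by
    rw [dist_eq_norm']; exact hjump i
  simpa [dist_eq_norm'] using this

lemma summable_geometric_mul_norm_rpow {α r : ℝ} (hα0 : 0 ≤ α) (hα1 : α < 1) (hr : 0 ≤ r)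
    (hjump : ∀ t, ‖xs (t + 1) - xs t‖ ≤ J) :
    Summable fun t ↦ α ^ t * ‖xs t‖ ^ r := by
  refine summable_geometric_mul_rpow_of_le_add_mul hα0 hα1 hr ?_ (fun _ ↦ norm_nonneg _)
    (A := ‖xs 0‖) (J := J) fun t ↦ ?_
  · simpa using (norm_nonneg _).trans (hjump 0)
  · linarith [norm_le_norm_add_norm_sub' (xs t) (xs 0),
      norm_sub_le_mul_of_norm_succ_sub_le hjump t]

lemma norm_rpow_add_one_div_le_tsum {α r : ℝ} (hα0 : 0 ≤ α) (hα1 : α < 1) (hr : 0 ≤ r)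
    (hJ : 0 < J) (hjump : ∀ t, ‖xs (t + 1) - xs t‖ ≤ J) :
    ‖xs 0‖ ^ (r + 1) / (2 ^ r * (2 * J + ‖xs 0‖ * (1 - α))) ≤
      ∑' t, α ^ t * ‖xs t‖ ^ r := by
  set X := ‖xs 0‖
  set N := X / (2 * J) with hN
  set n := ⌈N⌉₊
  have hX : 0 ≤ X := norm_nonneg _
  have hε : 0 < 1 - α := by linarith
  have hnear : ∀ t < n, X / 2 ≤ ‖xs t‖ := fun t ht ↦ by
    have htN : t * (2 * J) < X := (lt_div_iff₀ (by positivity)).1 (Nat.lt_ceil.1 ht)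
    linarith [norm_sub_norm_le (xs 0) (xs t), norm_sub_rev (xs 0) (xs t),
      norm_sub_le_mul_of_norm_succ_sub_le hjump t]
  have hpartial : (X / 2) ^ r * ∑ t ∈ range n, α ^ t ≤ ∑' t, α ^ t * ‖xs t‖ ^ r := calc
    (X / 2) ^ r * ∑ t ∈ range n, α ^ t = ∑ t ∈ range n, α ^ t * (X / 2) ^ r := by
      rw [mul_sum]; simp_rw [mul_comm]
    _ ≤ ∑ t ∈ range n, α ^ t * ‖xs t‖ ^ r :=
      sum_le_sum fun t ht ↦ by gcongr; exact hnear t (mem_range.1 ht)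
    _ ≤ ∑' t, α ^ t * ‖xs t‖ ^ r :=
      (summable_geometric_mul_norm_rpow hα0 hα1 hr hjump).sum_le_tsum _
        fun t _ ↦ by positivity
  have hgeom : N / (1 + N * (1 - α)) ≤ ∑ t ∈ range n, α ^ t := by
    refine le_trans ?_ (div_one_add_mul_one_sub_le_geom_sum hα0 hα1 n)
    have hNn : N ≤ n := Nat.le_ceil N
    rw [div_le_div_iff₀ (by positivity) (by positivity)]
    nlinarith
  calc X ^ (r + 1) / (2 ^ r * (2 * J + X * (1 - α)))
      = (X / 2) ^ r * (N / (1 + N * (1 - α))) := by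
        rw [Real.rpow_add_one' hX (by linarith), Real.div_rpow hX zero_le_two, hN]
        field_simp
    _ ≤ ∑' t, α ^ t * ‖xs t‖ ^ r := le_trans (by gcongr) hpartial

lemma one_sub_rpow_neg_mul_le_tsum {α r ζ : ℝ} (hα0 : 0 ≤ α) (hα1 : α < 1) (hr : 0 ≤ r)
    (hζ1 : ζ ≤ 1) (hJ : 0 < J) (hjump : ∀ t, ‖xs (t + 1) - xs t‖ ≤ J)
    (hx : (1 - α) ^ (-ζ) ≤ ‖xs 0‖) :
    (1 - α) ^ (-(ζ * (r + 1))) ≤ 2 ^ r * (2 * J + 1) * ∑' t, α ^ t * ‖xs t‖ ^ r := by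
  set ε := 1 - α
  set X := ‖xs 0‖
  have hε0 : 0 < ε := by linarith
  have hε1 : ε ≤ 1 := by linarith
  have hX : 0 < X := (Real.rpow_pos_of_pos hε0 _).trans_le hx
  have hpow : ∀ p, 0 ≤ p → ε ^ (-(ζ * p)) ≤ X ^ p := fun p hp ↦ by
    rw [← neg_mul, Real.rpow_mul hε0.le]; gcongr
  have hfar : ε ^ (-(ζ * (r + 1))) ≤ X ^ (r + 1) := hpow _ (by linarith)
  have hfar' : ε ^ (-(ζ * (r + 1))) * ε ≤ X ^ r := calc
    ε ^ (-(ζ * (r + 1))) * ε = ε ^ (-(ζ * (r + 1)) + 1) := (Real.rpow_add_one hε0.ne' _).symm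
    _ ≤ ε ^ (-(ζ * r)) := Real.rpow_le_rpow_of_exponent_ge hε0 hε1 (by nlinarith)
    _ ≤ X ^ r := hpow r hr
  have hkey : ε ^ (-(ζ * (r + 1))) * (2 * J + X * ε) ≤ (2 * J + 1) * X ^ (r + 1) := by
    rw [Real.rpow_add_one hX.ne'] at hfar ⊢
    nlinarith [mul_le_mul_of_nonneg_left hfar (by positivity : 0 ≤ 2 * J),
      mul_le_mul_of_nonneg_left hfar' hX.le]
  calc ε ^ (-(ζ * (r + 1)))
      ≤ 2 ^ r * (2 * J + 1) * (X ^ (r + 1) / (2 ^ r * (2 * J + X * ε))) := by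
        rw [mul_div_assoc', le_div_iff₀ (by positivity)]
        nlinarith [Real.rpow_pos_of_pos (zero_lt_two' ℝ) r]
    _ ≤ 2 ^ r * (2 * J + 1) * ∑' t, α ^ t * ‖xs t‖ ^ r := by
        gcongr; exact norm_rpow_add_one_div_le_tsum hα0 hα1 hr hJ hjump

lemma tsum_geometric_mul_le_mul_tsum_norm_rpow {α r a b χ ζ Γ₀ : ℝ} {H : E → ℝ} (hα0 : 0 ≤ α)
    (hα1 : α < 1) (hr : 0 ≤ r) (hχ : 1 ≤ χ) (ha : a + 1 ≤ χ) (hb : b + 1 ≤ χ) (hζ1 : ζ ≤ 1)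
    (hζχ : ζ * (r + 1) = χ) (hJ : 0 < J) (hΓ₀ : 0 ≤ Γ₀) (hjump : ∀ t, ‖xs (t + 1) - xs t‖ ≤ J)
    (hx : (1 - α) ^ (-ζ) ≤ ‖xs 0‖)
    (hH : ∀ y, 0 ≤ H y ∧ H y ≤ Γ₀ * ((1 + ‖y‖) ^ r + (1 - α) ^ (-a) + (1 - α) ^ (-b))) :
    ∑' t, α ^ t * H (xs t) ≤
      Γ₀ * 2 ^ r * (1 + (2 ^ r + 2) * (2 * J + 1)) * ∑' t, α ^ t * ‖xs t‖ ^ r := by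
  set S := ∑' t, α ^ t * ‖xs t‖ ^ r
  have hHle : ∀ y, H y ≤ Γ₀ * 2 ^ r * ‖y‖ ^ r + Γ₀ * (2 ^ r + (1 - α) ^ (-a) + (1 - α) ^ (-b)) :=
    fun y ↦ by
      have h := Real.add_rpow_le_two_rpow_mul_rpow_add_rpow zero_le_one (norm_nonneg y) hr
      rw [Real.one_rpow] at h
      nlinarith [(hH y).2]
  have hupper : ∑' t, α ^ t * H (xs t) ≤
      Γ₀ * 2 ^ r * S + Γ₀ * (2 ^ r + (1 - α) ^ (-a) + (1 - α) ^ (-b)) * (1 - α)⁻¹ :=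
    tsum_geometric_mul_le_of_le_mul_add hα0 hα1 (fun t ↦ (hH (xs t)).1) (fun t ↦ hHle (xs t))
      (summable_geometric_mul_norm_rpow hα0 hα1 hr hjump)
  have hexp := add_rpow_neg_add_rpow_neg_mul_inv_le (ε := 1 - α) (c := 2 ^ r)
    (by linarith) (by linarith) (by positivity) hχ ha hb
  have hlower : (1 - α) ^ (-χ) ≤ 2 ^ r * (2 * J + 1) * S :=
    hζχ ▸ one_sub_rpow_neg_mul_le_tsum hα0 hα1 hr hζ1 hJ hjump hx
  calc ∑' t, α ^ t * H (xs t)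
      ≤ Γ₀ * 2 ^ r * S + Γ₀ * ((2 ^ r + (1 - α) ^ (-a) + (1 - α) ^ (-b)) * (1 - α)⁻¹) := by
        rw [← mul_assoc]; exact hupper
    _ ≤ Γ₀ * 2 ^ r * S + Γ₀ * ((2 ^ r + 2) * (2 ^ r * (2 * J + 1) * S)) := by
        gcongr _ + Γ₀ * ?_
        exact hexp.trans (by gcongr)
    _ = Γ₀ * 2 ^ r * (1 + (2 ^ r + 2) * (2 * J + 1)) * S := by ring

end Trajectory

theorem order_optimality_pathwise_general
    (d : ℕ) (β k m jmp Γ₀ : ℝ)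
    (hk : max 1 β ≤ k)
    (hm2 : m ≤ k + 1)
    (hjmp : 1 ≤ jmp) (hΓ₀ : 0 < Γ₀)
    (χ ζ : ℝ)
    (hχ : χ = max (m * (k - β) / (k + 2) + 1) ((k + 2 - β) / 2))
    (hζ : ζ = χ / (k + 1 - β)) :
    ∃ Γ : ℝ, 0 < Γ ∧
      ∀ α : ℝ, 1 / 2 ≤ α → α < 1 →
      ∀ x : EuclideanSpace ℝ (Fin d), (1 - α) ^ (-ζ) ≤ ‖x‖ →
      ∀ xs : ℕ → EuclideanSpace ℝ (Fin d), xs 0 = x →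
      (∀ t : ℕ, ‖xs (t + 1) - xs t‖ ≤ jmp) →
      ∀ H : EuclideanSpace ℝ (Fin d) → ℝ,
      (∀ y, 0 ≤ H y ∧ H y ≤ Γ₀ * ((1 + ‖y‖) ^ (k - β) +
          (1 - α) ^ (-(m * (k - β) / (k + 2))) + (1 - α) ^ (-((k - β) / 2)))) →
      (∑' t : ℕ, α ^ t * H (xs t)) ≤ Γ * ∑' t : ℕ, α ^ t * ‖xs t‖ ^ (k - β) := by
  obtain ⟨hk1, hβk⟩ := max_le_iff.1 hk
  have hr : 0 ≤ k - β := by linarith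
  set r := k - β
  have ha : m * r / (k + 2) + 1 ≤ χ := hχ ▸ le_max_left _ _
  have hb : r / 2 + 1 ≤ χ := hχ ▸ le_max_of_le_right (by linarith)
  have har : m * r / (k + 2) ≤ r := by
    rw [div_le_iff₀ (by linarith)]; nlinarith
  have hχr : χ ≤ r + 1 := hχ ▸ max_le (by linarith) (by linarith)
  rw [show k + 1 - β = r + 1 by linarith] at hζ
  have hζχ : ζ * (r + 1) = χ := by rw [hζ]; field_simp
  have hζ1 : ζ ≤ 1 := by rwa [hζ, div_le_one (by linarith)]
  refine ⟨Γ₀ * 2 ^ r * (1 + (2 ^ r + 2) * (2 * jmp + 1)), by positivity, ?_⟩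
  rintro α hα hα1 x hx xs rfl hjump H hH
  exact tsum_geometric_mul_le_mul_tsum_norm_rpow (by linarith) hα1 hr (by linarith) ha hb hζ1
    hζχ (by linarith) hΓ₀.le hjump hx hH

theorem order_optimality_pathwise
    (d : ℕ) (hd : 1 ≤ d) (β k m jmp Γ₀ : ℝ)
    (hβ0 : 0 < β) (hβ1 : β ≤ 1) (hk : max 1 β ≤ k)
    (hm1 : 1 ≤ m) (hm2 : m ≤ k + 1)
    (hjmp : 1 ≤ jmp) (hΓ₀ : 0 < Γ₀)
    (χ ζ : ℝ)
    (hχ : χ = max (m * (k - β) / (k + 2) + 1) ((k + 2 - β) / 2))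
    (hζ : ζ = χ / (k + 1 - β)) :
    ∃ Γ : ℝ, 0 < Γ ∧
      ∀ α : ℝ, 1 / 2 ≤ α → α < 1 →
      ∀ x : EuclideanSpace ℝ (Fin d), (1 - α) ^ (-ζ) ≤ ‖x‖ →
      ∀ xs : ℕ → EuclideanSpace ℝ (Fin d), xs 0 = x →
      (∀ t : ℕ, ‖xs (t + 1) - xs t‖ ≤ jmp) →
      ∀ H : EuclideanSpace ℝ (Fin d) → ℝ,
      (∀ y, 0 ≤ H y ∧ H y ≤ Γ₀ * ((1 + ‖y‖) ^ (k - β) +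
          (1 - α) ^ (-(m * (k - β) / (k + 2))) + (1 - α) ^ (-((k - β) / 2)))) →
      (∑' t : ℕ, α ^ t * H (xs t)) ≤ Γ * ∑' t : ℕ, α ^ t * ‖xs t‖ ^ (k - β) :=
  order_optimality_pathwise_general d β k m jmp Γ₀ hk hm2 hjmp hΓ₀ χ ζ hχ hζ
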